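/- arXiv:2605.16529 — 6 statements merged into one kernel-verified Lean document; each statement's English description precedes it below -/
import Mathlib

section
/- Let δ > 0, let K0, K1 be positive integers, let x_1,…,x_{K0}, y_1,…,y_{K1} ∈ ℝ^d, let M ∈ {0,1}^{K0×K1} be a binary mask with ‖x_i − y_j‖ < πδ whenever M_ij = 1, and let μ0 ∈ ℝ_{>0}^{K0}, μ1 ∈ ℝ_{>0}^{K1}. Suppose γ* is a nonnegative M-supported K0×K1 matrix that minimizes the masked OET objective F(γ) = Σ_{ij} C_ij γ_ij + KL(γ𝟙‖μ0) + KL(γᵀ𝟙‖μ1) over all nonnegative M-supported matrices, and that every row sum s_i = Σ_j γ*_ij and every column sum t_j = Σ_i γ*_ij of γ* is positive. Define γ0_ij = (γ*_ij / s_i)·μ0_i and γ1_ij = (γ*_ij / t_j)·μ1_j. Then (γ0, γ1) minimizes the static supervised WFR objective G(γ0′, γ1′) = Σ_{ij} 2δ²( γ0′_ij + γ1′_ij − 2√(γ0′_ij γ1′_ij)·cos̄(‖x_i − y_j‖/(2δ)) ) over all (γ0′, γ1′) in the supervised feasible set Γ_M(μ0, μ1). -/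
/-!
Write `c_ij = cos̄(‖x_i − y_j‖/(2δ))`. For `p, q ≥ 0` the WFR integrand `p + q − 2√(pq) c` is
the minimum over `g ≥ 0` of `−2 log c · g + KL(g‖p) + KL(g‖q)`, attained at `g = √(pq) c`.
Summing over `(i, j)` gives a lifted objective `L(γ; p, q)` with `G(p, q) = 2δ² min_γ L(γ; p, q)`.
By the log-sum inequality `F(γ) ≤ L(γ; p, q)` whenever `p` and `q` have marginals `μ0` and `μ1`,
with equality when `p`, `q` are the row and column rescalings of `γ` itself. Hence, with
`γ'_ij = √(γ0'_ij γ1'_ij) c_ij`,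
`G(γ0, γ1) ≤ 2δ² L(γ*; γ0, γ1) = 2δ² F(γ*) ≤ 2δ² F(γ') ≤ 2δ² L(γ'; γ0', γ1') = G(γ0', γ1')`.
-/

open scoped BigOperators

/-- `cos̄(x) = cos(min(x, π/2))`. -/
noncomputable def cosbar (t : ℝ) : ℝ := Real.cos (min t (Real.pi / 2))

/-- Generalized Kullback–Leibler divergence between finite nonnegative vectors. -/
noncomputable def KLvec {K : ℕ} (a b : Fin K → ℝ) : ℝ :=
  ∑ k, (a k * Real.log (a k / b k) - a k + b k)

/-- Row sums of a matrix. -/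
def rowSum {K0 K1 : ℕ} (γ : Fin K0 → Fin K1 → ℝ) (i : Fin K0) : ℝ := ∑ j, γ i j

/-- Column sums of a matrix. -/
def colSum {K0 K1 : ℕ} (γ : Fin K0 → Fin K1 → ℝ) (j : Fin K1) : ℝ := ∑ i, γ i j

/-- The masked OET objective `F(γ) = Σ C_ij γ_ij + KL(γ1‖μ0) + KL(γᵀ1‖μ1)`. -/
noncomputable def OETobj {d K0 K1 : ℕ} (δ : ℝ)
    (x : Fin K0 → EuclideanSpace ℝ (Fin d)) (y : Fin K1 → EuclideanSpace ℝ (Fin d))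
    (μ0 : Fin K0 → ℝ) (μ1 : Fin K1 → ℝ) (γ : Fin K0 → Fin K1 → ℝ) : ℝ :=
  (∑ i, ∑ j, (-2 * Real.log (cosbar (‖x i - y j‖ / (2 * δ)))) * γ i j)
    + KLvec (rowSum γ) μ0 + KLvec (colSum γ) μ1

/-- The static supervised WFR objective
`G(γ0, γ1) = Σ 2δ²(γ0_ij + γ1_ij − 2√(γ0_ij γ1_ij) cos̄(‖x_i − y_j‖/(2δ)))`. -/
noncomputable def WFRobj {d K0 K1 : ℕ} (δ : ℝ)
    (x : Fin K0 → EuclideanSpace ℝ (Fin d)) (y : Fin K1 → EuclideanSpace ℝ (Fin d))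
    (γ0 γ1 : Fin K0 → Fin K1 → ℝ) : ℝ :=
  ∑ i, ∑ j, 2 * δ ^ 2 *
    (γ0 i j + γ1 i j
      - 2 * Real.sqrt (γ0 i j * γ1 i j) * cosbar (‖x i - y j‖ / (2 * δ)))

/-- Membership in the supervised feasible set `Γ_M(μ0, μ1)`. -/
def SupervisedFeasible {K0 K1 : ℕ} (M : Fin K0 → Fin K1 → Bool)
    (μ0 : Fin K0 → ℝ) (μ1 : Fin K1 → ℝ) (γ0 γ1 : Fin K0 → Fin K1 → ℝ) : Prop :=
  (∀ i j, 0 ≤ γ0 i j) ∧ (∀ i j, 0 ≤ γ1 i j) ∧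
  (∀ i, rowSum γ0 i = μ0 i) ∧ (∀ j, colSum γ1 j = μ1 j) ∧
  (∀ i j, M i j = false → γ0 i j = 0 ∧ γ1 i j = 0)

open Real Finset

noncomputable def klTerm (a b : ℝ) : ℝ := a * log (a / b) - a + b

lemma mul_log_add_one_sub_mul_le_klTerm {a b l : ℝ} (ha : 0 ≤ a) (hb : 0 ≤ b) (hl : 0 < l)
    (hba : b = 0 → a = 0) : a * log l + (1 - l) * b ≤ klTerm a b := by
  rcases ha.eq_or_lt with rfl | ha
  · simp only [klTerm]; nlinarith
  have hb : 0 < b := hb.lt_of_ne fun h => ha.ne' (hba h.symm)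
  have hlog : log (a / b) = log l - log (l * b / a) := by
    rw [log_div ha.ne' hb.ne', log_div (by positivity) ha.ne', log_mul hl.ne' hb.ne']
    ring
  have key : a * log (l * b / a) ≤ l * b - a := by
    have := mul_le_mul_of_nonneg_left (log_le_sub_one_of_pos (by positivity : 0 < l * b / a)) ha.le
    rwa [mul_sub, mul_div_cancel₀ _ ha.ne', mul_one] at this
  rw [klTerm, hlog]
  linarith

/-- The log-sum inequality. -/
theorem klTerm_sum_le_sum_klTerm {ι : Type*} (s : Finset ι) {a b : ι → ℝ}
    (ha : ∀ k ∈ s, 0 ≤ a k) (hb : ∀ k ∈ s, 0 ≤ b k) (hba : ∀ k ∈ s, b k = 0 → a k = 0)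
    (hB : 0 < ∑ k ∈ s, b k) :
    klTerm (∑ k ∈ s, a k) (∑ k ∈ s, b k) ≤ ∑ k ∈ s, klTerm (a k) (b k) := by
  set A := ∑ k ∈ s, a k
  set B := ∑ k ∈ s, b k
  rcases (sum_nonneg ha).eq_or_lt with hA | hA
  · have ha0 : ∀ k ∈ s, a k = 0 := (sum_eq_zero_iff_of_nonneg ha).mp hA.symm
    have hterm : ∀ k ∈ s, klTerm (a k) (b k) = b k := fun k hk => by simp [klTerm, ha0 k hk]
    rw [sum_congr rfl hterm, show A = 0 from hA.symm]
    simp [klTerm, B]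
  calc klTerm A B = ∑ k ∈ s, (a k * log (A / B) + (1 - A / B) * b k) := by
        rw [sum_add_distrib, ← sum_mul, ← mul_sum, klTerm]
        field_simp
        ring
    _ ≤ ∑ k ∈ s, klTerm (a k) (b k) := sum_le_sum fun k hk =>
        mul_log_add_one_sub_mul_le_klTerm (ha k hk) (hb k hk) (div_pos hA hB) (hba k hk)

/-- Equality case of the log-sum inequality: `b` proportional to `a`. -/
theorem sum_klTerm_div_sum_mul {ι : Type*} (s : Finset ι) (a : ι → ℝ) (m : ℝ)
    (hA : ∑ k ∈ s, a k ≠ 0) :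
    ∑ k ∈ s, klTerm (a k) (a k / (∑ l ∈ s, a l) * m) = klTerm (∑ k ∈ s, a k) m := by
  set A := ∑ k ∈ s, a k
  have hterm : ∀ k ∈ s, klTerm (a k) (a k / A * m) = a k * log (A / m) - a k + a k / A * m := by
    intro k _
    rcases eq_or_ne (a k) 0 with h | h
    · simp [klTerm, h]
    · rw [klTerm, div_mul_eq_mul_div, div_div_eq_mul_div, mul_div_mul_left _ _ h]
  rw [sum_congr rfl hterm, sum_add_distrib, sum_sub_distrib, ← sum_mul, ← sum_mul, ← sum_div,
    div_self hA, one_mul, klTerm]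

noncomputable def wfrCost (c p q : ℝ) : ℝ := p + q - 2 * √(p * q) * c

noncomputable def liftedCost (c g p q : ℝ) : ℝ := -2 * log c * g + klTerm g p + klTerm g q

lemma wfrCost_le_liftedCost {c g p q : ℝ} (hg : 0 ≤ g) (hc : 0 ≤ c)
    (hpos : 0 < g → 0 < p ∧ 0 < q ∧ 0 < c) : wfrCost c p q ≤ liftedCost c g p q := by
  rcases hg.eq_or_lt with rfl | hg
  · have : 0 ≤ 2 * √(p * q) * c := by positivity
    simpa [wfrCost, liftedCost, klTerm] using this
  obtain ⟨hp, hq, hc⟩ := hpos hg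
  set u := √(p * q) * c
  have hu : 0 < u := by positivity
  have hlog : log (g / p) + log (g / q) = 2 * log c - 2 * log (u / g) := by
    rw [log_div hu.ne' hg.ne', log_mul (by positivity) hc.ne', log_sqrt (by positivity),
      log_mul hp.ne' hq.ne', log_div hg.ne' hp.ne', log_div hg.ne' hq.ne']
    ring
  have key : g * log (u / g) ≤ u - g := by
    have := mul_le_mul_of_nonneg_left (log_le_sub_one_of_pos (div_pos hu hg)) hg.le
    rwa [mul_sub, mul_div_cancel₀ _ hg.ne', mul_one] at this
  simp only [wfrCost, liftedCost, klTerm]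
  nlinarith

lemma wfrCost_eq_liftedCost_sqrt {c p q : ℝ} (hp : 0 ≤ p) (hq : 0 ≤ q) (hc : 0 ≤ c) :
    wfrCost c p q = liftedCost c (√(p * q) * c) p q := by
  set g := √(p * q) * c
  rcases (by positivity : 0 ≤ g).eq_or_lt with hg | hg
  · simp only [wfrCost, liftedCost, klTerm, ← hg]
    simpa using mul_eq_zero.mp hg.symm
  have hpq : 0 < p * q := sqrt_pos.mp (pos_of_mul_pos_left hg hc)
  have hc : 0 < c := pos_of_mul_pos_right hg (sqrt_nonneg _)
  have hp : 0 < p := hp.lt_of_ne (by rintro rfl; simp at hpq)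
  have hq : 0 < q := hq.lt_of_ne (by rintro rfl; simp at hpq)
  have hlog : log (g / p) + log (g / q) = 2 * log c := by
    have hsq : g / p * (g / q) = c ^ 2 := by
      field_simp
      rw [mul_pow, sq_sqrt hpq.le]
    rw [← log_mul (by positivity) (by positivity), hsq, log_pow]
    push_cast
    ring
  simp only [wfrCost, liftedCost, klTerm]
  linear_combination -g * hlog

lemma cosbar_nonneg {t : ℝ} (ht : -(π / 2) ≤ t) : 0 ≤ cosbar t :=
  cos_nonneg_of_mem_Icc ⟨le_min ht (by linarith [pi_pos]), min_le_right _ _⟩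

lemma cosbar_pos {t : ℝ} (ht : -(π / 2) < t) (ht' : t < π / 2) : 0 < cosbar t := by
  rw [cosbar, min_eq_left ht'.le]
  exact cos_pos_of_mem_Ioo ⟨ht, ht'⟩

section Matrices

variable {d K0 K1 : ℕ}

noncomputable def cosbarMatrix (δ : ℝ) (x : Fin K0 → EuclideanSpace ℝ (Fin d))
    (y : Fin K1 → EuclideanSpace ℝ (Fin d)) (i : Fin K0) (j : Fin K1) : ℝ :=
  cosbar (‖x i - y j‖ / (2 * δ))

lemma cosbarMatrix_nonneg {δ : ℝ} (hδ : 0 ≤ δ) (x : Fin K0 → EuclideanSpace ℝ (Fin d))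
    (y : Fin K1 → EuclideanSpace ℝ (Fin d)) (i : Fin K0) (j : Fin K1) :
    0 ≤ cosbarMatrix δ x y i j :=
  cosbar_nonneg (by have : 0 ≤ ‖x i - y j‖ / (2 * δ) := by positivity
                    linarith [pi_pos])

lemma cosbarMatrix_pos {δ : ℝ} (hδ : 0 < δ) {x : Fin K0 → EuclideanSpace ℝ (Fin d)}
    {y : Fin K1 → EuclideanSpace ℝ (Fin d)} {i : Fin K0} {j : Fin K1}
    (hxy : ‖x i - y j‖ < π * δ) : 0 < cosbarMatrix δ x y i j := by
  have : 0 ≤ ‖x i - y j‖ / (2 * δ) := by positivity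
  refine cosbar_pos (by linarith [pi_pos]) ?_
  rw [div_lt_iff₀ (by positivity)]
  linarith

noncomputable def rowRescale (γ : Fin K0 → Fin K1 → ℝ) (μ : Fin K0 → ℝ) (i : Fin K0)
    (j : Fin K1) : ℝ :=
  γ i j / rowSum γ i * μ i

noncomputable def colRescale (γ : Fin K0 → Fin K1 → ℝ) (μ : Fin K1 → ℝ) (i : Fin K0)
    (j : Fin K1) : ℝ :=
  γ i j / colSum γ j * μ j

lemma rowSum_rowRescale {γ : Fin K0 → Fin K1 → ℝ} (μ : Fin K0 → ℝ) {i : Fin K0}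
    (h : rowSum γ i ≠ 0) : rowSum (rowRescale γ μ) i = μ i := by
  simp only [rowSum, rowRescale]
  rw [← sum_mul, ← sum_div, ← rowSum, div_self h, one_mul]

lemma colSum_colRescale {γ : Fin K0 → Fin K1 → ℝ} (μ : Fin K1 → ℝ) {j : Fin K1}
    (h : colSum γ j ≠ 0) : colSum (colRescale γ μ) j = μ j := by
  simp only [colSum, colRescale]
  rw [← sum_mul, ← sum_div, ← colSum, div_self h, one_mul]

lemma supervisedFeasible_rescale {M : Fin K0 → Fin K1 → Bool} {μ0 : Fin K0 → ℝ}
    {μ1 : Fin K1 → ℝ} (hμ0 : ∀ i, 0 ≤ μ0 i) (hμ1 : ∀ j, 0 ≤ μ1 j)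
    {γ : Fin K0 → Fin K1 → ℝ} (hγ : ∀ i j, 0 ≤ γ i j)
    (hsupp : ∀ i j, M i j = false → γ i j = 0)
    (hrow : ∀ i, 0 < rowSum γ i) (hcol : ∀ j, 0 < colSum γ j) :
    SupervisedFeasible M μ0 μ1 (rowRescale γ μ0) (colRescale γ μ1) := by
  refine ⟨fun i j => ?_, fun i j => ?_, fun i => rowSum_rowRescale μ0 (hrow i).ne',
    fun j => colSum_colRescale μ1 (hcol j).ne', fun i j h => ?_⟩
  · have := hrow i; have := hγ i j; have := hμ0 i; unfold rowRescale; positivity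
  · have := hcol j; have := hγ i j; have := hμ1 j; unfold colRescale; positivity
  · simp [rowRescale, colRescale, hsupp i j h]

noncomputable def liftedOET (c γ p q : Fin K0 → Fin K1 → ℝ) : ℝ :=
  ∑ i, ∑ j, liftedCost (c i j) (γ i j) (p i j) (q i j)

lemma WFRobj_eq_sum_wfrCost (δ : ℝ) (x : Fin K0 → EuclideanSpace ℝ (Fin d))
    (y : Fin K1 → EuclideanSpace ℝ (Fin d)) (p q : Fin K0 → Fin K1 → ℝ) :
    WFRobj δ x y p q = 2 * δ ^ 2 * ∑ i, ∑ j, wfrCost (cosbarMatrix δ x y i j) (p i j) (q i j) := by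
  simp only [WFRobj, mul_sum, wfrCost, cosbarMatrix]

lemma sum_wfrCost_le_liftedOET {c γ p q : Fin K0 → Fin K1 → ℝ} (hγ : ∀ i j, 0 ≤ γ i j)
    (hc : ∀ i j, 0 ≤ c i j) (hpos : ∀ i j, 0 < γ i j → 0 < p i j ∧ 0 < q i j ∧ 0 < c i j) :
    ∑ i, ∑ j, wfrCost (c i j) (p i j) (q i j) ≤ liftedOET c γ p q :=
  sum_le_sum fun i _ => sum_le_sum fun j _ =>
    wfrCost_le_liftedCost (hγ i j) (hc i j) (hpos i j)

lemma sum_wfrCost_eq_liftedOET_sqrt {c p q : Fin K0 → Fin K1 → ℝ} (hp : ∀ i j, 0 ≤ p i j)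
    (hq : ∀ i j, 0 ≤ q i j) (hc : ∀ i j, 0 ≤ c i j) :
    ∑ i, ∑ j, wfrCost (c i j) (p i j) (q i j)
      = liftedOET c (fun i j => √(p i j * q i j) * c i j) p q :=
  sum_congr rfl fun i _ => sum_congr rfl fun j _ =>
    wfrCost_eq_liftedCost_sqrt (hp i j) (hq i j) (hc i j)

lemma OETobj_eq_liftedOET (δ : ℝ) (x : Fin K0 → EuclideanSpace ℝ (Fin d))
    (y : Fin K1 → EuclideanSpace ℝ (Fin d)) (μ0 : Fin K0 → ℝ) (μ1 : Fin K1 → ℝ)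
    {γ : Fin K0 → Fin K1 → ℝ} (hrow : ∀ i, rowSum γ i ≠ 0) (hcol : ∀ j, colSum γ j ≠ 0) :
    OETobj δ x y μ0 μ1 γ
      = liftedOET (cosbarMatrix δ x y) γ (rowRescale γ μ0) (colRescale γ μ1) := by
  have hKL0 : KLvec (rowSum γ) μ0 = ∑ i, ∑ j, klTerm (γ i j) (rowRescale γ μ0 i j) :=
    sum_congr rfl fun i _ => (sum_klTerm_div_sum_mul univ (γ i) (μ0 i) (hrow i)).symm
  have hKL1 : KLvec (colSum γ) μ1 = ∑ i, ∑ j, klTerm (γ i j) (colRescale γ μ1 i j) := by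
    rw [sum_comm]
    exact sum_congr rfl fun j _ => (sum_klTerm_div_sum_mul univ (γ · j) (μ1 j) (hcol j)).symm
  simp only [liftedOET, liftedCost, sum_add_distrib, OETobj, hKL0, hKL1, cosbarMatrix]

lemma OETobj_le_liftedOET (δ : ℝ) (x : Fin K0 → EuclideanSpace ℝ (Fin d))
    (y : Fin K1 → EuclideanSpace ℝ (Fin d)) {μ0 : Fin K0 → ℝ} {μ1 : Fin K1 → ℝ}
    (hμ0 : ∀ i, 0 < μ0 i) (hμ1 : ∀ j, 0 < μ1 j) {γ p q : Fin K0 → Fin K1 → ℝ}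
    (hγ : ∀ i j, 0 ≤ γ i j) (hp : ∀ i j, 0 ≤ p i j) (hq : ∀ i j, 0 ≤ q i j)
    (hpγ : ∀ i j, p i j = 0 → γ i j = 0) (hqγ : ∀ i j, q i j = 0 → γ i j = 0)
    (hprow : ∀ i, rowSum p i = μ0 i) (hqcol : ∀ j, colSum q j = μ1 j) :
    OETobj δ x y μ0 μ1 γ ≤ liftedOET (cosbarMatrix δ x y) γ p q := by
  have hKL0 : KLvec (rowSum γ) μ0 ≤ ∑ i, ∑ j, klTerm (γ i j) (p i j) :=
    sum_le_sum fun i _ => hprow i ▸ klTerm_sum_le_sum_klTerm univ (fun j _ => hγ i j)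
      (fun j _ => hp i j) (fun j _ => hpγ i j) ((hμ0 i).trans_eq (hprow i).symm)
  have hKL1 : KLvec (colSum γ) μ1 ≤ ∑ i, ∑ j, klTerm (γ i j) (q i j) := by
    rw [sum_comm]
    exact sum_le_sum fun j _ => hqcol j ▸ klTerm_sum_le_sum_klTerm univ (fun i _ => hγ i j)
      (fun i _ => hq i j) (fun i _ => hqγ i j) ((hμ1 j).trans_eq (hqcol j).symm)
  simp only [liftedOET, liftedCost, sum_add_distrib, OETobj, cosbarMatrix]
  gcongr

end Matrices

theorem oet_minimizer_yields_wfr_minimizer_general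
    {d K0 K1 : ℕ}
    (δ : ℝ) (hδ : 0 < δ)
    (x : Fin K0 → EuclideanSpace ℝ (Fin d)) (y : Fin K1 → EuclideanSpace ℝ (Fin d))
    (M : Fin K0 → Fin K1 → Bool)
    (hM : ∀ i j, M i j = true → ‖x i - y j‖ < Real.pi * δ)
    (μ0 : Fin K0 → ℝ) (μ1 : Fin K1 → ℝ)
    (hμ0 : ∀ i, 0 < μ0 i) (hμ1 : ∀ j, 0 < μ1 j)
    (γstar : Fin K0 → Fin K1 → ℝ)
    (hγnn : ∀ i j, 0 ≤ γstar i j)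
    (hγsupp : ∀ i j, M i j = false → γstar i j = 0)
    (hopt : ∀ γ' : Fin K0 → Fin K1 → ℝ, (∀ i j, 0 ≤ γ' i j) →
      (∀ i j, M i j = false → γ' i j = 0) →
      OETobj δ x y μ0 μ1 γstar ≤ OETobj δ x y μ0 μ1 γ')
    (hrow : ∀ i, 0 < rowSum γstar i) (hcol : ∀ j, 0 < colSum γstar j)
    (γ0 γ1 : Fin K0 → Fin K1 → ℝ)
    (hγ0 : ∀ i j, γ0 i j = γstar i j / rowSum γstar i * μ0 i)
    (hγ1 : ∀ i j, γ1 i j = γstar i j / colSum γstar j * μ1 j) :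
    SupervisedFeasible M μ0 μ1 γ0 γ1 ∧
      ∀ γ0' γ1' : Fin K0 → Fin K1 → ℝ, SupervisedFeasible M μ0 μ1 γ0' γ1' →
        WFRobj δ x y γ0 γ1 ≤ WFRobj δ x y γ0' γ1' := by
  obtain rfl : γ0 = rowRescale γstar μ0 := funext fun i => funext (hγ0 i)
  obtain rfl : γ1 = colRescale γstar μ1 := funext fun i => funext (hγ1 i)
  refine ⟨supervisedFeasible_rescale (fun i => (hμ0 i).le) (fun j => (hμ1 j).le) hγnn hγsupp
    hrow hcol, fun γ0' γ1' ⟨h0, h1, hrow0', hcol1', hmask'⟩ => ?_⟩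
  set c := cosbarMatrix δ x y
  have hc : ∀ i j, 0 ≤ c i j := cosbarMatrix_nonneg hδ.le x y
  have hpos : ∀ i j, 0 < γstar i j →
      0 < rowRescale γstar μ0 i j ∧ 0 < colRescale γstar μ1 i j ∧ 0 < c i j := fun i j hg => by
    have hMij : M i j = true := by
      by_contra h
      exact hg.ne' (hγsupp i j (by simpa using h))
    have := hrow i; have := hcol j; have := hμ0 i; have := hμ1 j
    exact ⟨by unfold rowRescale; positivity, by unfold colRescale; positivity,
      cosbarMatrix_pos hδ (hM i j hMij)⟩
  set γ' := fun i j => √(γ0' i j * γ1' i j) * c i j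
  have hγ' : ∀ i j, 0 ≤ γ' i j := fun i j => mul_nonneg (sqrt_nonneg _) (hc i j)
  rw [WFRobj_eq_sum_wfrCost, WFRobj_eq_sum_wfrCost, sum_wfrCost_eq_liftedOET_sqrt h0 h1 hc]
  refine mul_le_mul_of_nonneg_left ?_ (by positivity)
  calc _ ≤ liftedOET c γstar (rowRescale γstar μ0) (colRescale γstar μ1) :=
        sum_wfrCost_le_liftedOET hγnn hc hpos
    _ = OETobj δ x y μ0 μ1 γstar :=
        (OETobj_eq_liftedOET δ x y μ0 μ1 (fun i => (hrow i).ne') (fun j => (hcol j).ne')).symm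
    _ ≤ OETobj δ x y μ0 μ1 γ' := hopt γ' hγ' fun i j h => by simp [γ', (hmask' i j h).1]
    _ ≤ liftedOET c γ' γ0' γ1' := OETobj_le_liftedOET δ x y hμ0 hμ1 hγ' h0 h1
        (fun i j h => by simp [γ', h]) (fun i j h => by simp [γ', h]) hrow0' hcol1'

theorem oet_minimizer_yields_wfr_minimizer
    {d K0 K1 : ℕ} (hK0 : 0 < K0) (hK1 : 0 < K1)
    (δ : ℝ) (hδ : 0 < δ)
    (x : Fin K0 → EuclideanSpace ℝ (Fin d)) (y : Fin K1 → EuclideanSpace ℝ (Fin d))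
    (M : Fin K0 → Fin K1 → Bool)
    (hM : ∀ i j, M i j = true → ‖x i - y j‖ < Real.pi * δ)
    (μ0 : Fin K0 → ℝ) (μ1 : Fin K1 → ℝ)
    (hμ0 : ∀ i, 0 < μ0 i) (hμ1 : ∀ j, 0 < μ1 j)
    (γstar : Fin K0 → Fin K1 → ℝ)
    (hγnn : ∀ i j, 0 ≤ γstar i j)
    (hγsupp : ∀ i j, M i j = false → γstar i j = 0)
    (hopt : ∀ γ' : Fin K0 → Fin K1 → ℝ, (∀ i j, 0 ≤ γ' i j) →
      (∀ i j, M i j = false → γ' i j = 0) →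
      OETobj δ x y μ0 μ1 γstar ≤ OETobj δ x y μ0 μ1 γ')
    (hrow : ∀ i, 0 < rowSum γstar i) (hcol : ∀ j, 0 < colSum γstar j)
    (γ0 γ1 : Fin K0 → Fin K1 → ℝ)
    (hγ0 : ∀ i j, γ0 i j = γstar i j / rowSum γstar i * μ0 i)
    (hγ1 : ∀ i j, γ1 i j = γstar i j / colSum γstar j * μ1 j) :
    SupervisedFeasible M μ0 μ1 γ0 γ1 ∧
      ∀ γ0' γ1' : Fin K0 → Fin K1 → ℝ, SupervisedFeasible M μ0 μ1 γ0' γ1' →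
        WFRobj δ x y γ0 γ1 ≤ WFRobj δ x y γ0' γ1' :=
  oet_minimizer_yields_wfr_minimizer_general δ hδ x y M hM μ0 μ1 hμ0 hμ1 γstar hγnn hγsupp hopt hrow
    hcol γ0 γ1 hγ0 hγ1
end

section
/- In the hierarchical lifting setting, assume every coarse row sum s_I = Σ_J γ_IJ is positive. Let γ0_IJ = (γ_IJ / s_I)·w0_I be the starting semi-coupling of the coarse coupling with respect to the coarse weights, and for each fine pair (i, j) let γ̃0_ij = (γ̃_ij / Σ_{j′} γ̃_{ij′})·w0_i be the starting semi-coupling of the lifted coupling with respect to the fine weights. Then for all fine i, j with I = pa0(i) and J = pa1(j): γ̃0_ij = γ0_IJ · α_i · β_j. -/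
open scoped BigOperators

/-- Coarse weight of a coarse cluster: sum of the fine weights of its children. -/
def coarseWeight {ι κ : Type*} [Fintype ι] [DecidableEq κ] (pa : ι → κ) (w : ι → ℝ)
    (I : κ) : ℝ :=
  ∑ i ∈ Finset.univ.filter (fun i => pa i = I), w i

/-- Within-block probability of a fine element inside its parent cluster. -/
noncomputable def withinBlockProb {ι κ : Type*} [Fintype ι] [DecidableEq κ]
    (pa : ι → κ) (w : ι → ℝ) (i : ι) : ℝ :=
  w i / coarseWeight pa w (pa i)

/-- Within-block independent lifting of a coarse coupling to the fine level. -/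
noncomputable def liftedCoupling {ι0 ι1 κ0 κ1 : Type*} [Fintype ι0] [Fintype ι1]
    [DecidableEq κ0] [DecidableEq κ1]
    (pa0 : ι0 → κ0) (pa1 : ι1 → κ1) (w0 : ι0 → ℝ) (w1 : ι1 → ℝ)
    (γ : κ0 → κ1 → ℝ) (i : ι0) (j : ι1) : ℝ :=
  γ (pa0 i) (pa1 j) * withinBlockProb pa0 w0 i * withinBlockProb pa1 w1 j

theorem lifted_starting_semicoupling_formula
    {ι0 ι1 κ0 κ1 : Type*} [Fintype ι0] [Fintype ι1] [Fintype κ0] [Fintype κ1]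
    [DecidableEq κ0] [DecidableEq κ1]
    (pa0 : ι0 → κ0) (pa1 : ι1 → κ1)
    (w0 : ι0 → ℝ) (w1 : ι1 → ℝ)
    (hw0 : ∀ i, 0 < w0 i) (hw1 : ∀ j, 0 < w1 j)
    (hW0 : ∀ I, 0 < coarseWeight pa0 w0 I) (hW1 : ∀ J, 0 < coarseWeight pa1 w1 J)
    (γ : κ0 → κ1 → ℝ) (hγ : ∀ I J, 0 ≤ γ I J)
    (hs : ∀ I, 0 < ∑ J, γ I J)
    (γ0 : κ0 → κ1 → ℝ)
    (hγ0 : ∀ I J, γ0 I J = γ I J / (∑ J', γ I J') * coarseWeight pa0 w0 I)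
    (γ0lift : ι0 → ι1 → ℝ)
    (hγ0lift : ∀ i j, γ0lift i j
      = liftedCoupling pa0 pa1 w0 w1 γ i j
          / (∑ j', liftedCoupling pa0 pa1 w0 w1 γ i j') * w0 i) :
    ∀ i j, γ0lift i j
      = γ0 (pa0 i) (pa1 j) * withinBlockProb pa0 w0 i * withinBlockProb pa1 w1 j := by
  intro i j
  have hsum : ∀ J : κ1, ∑ j' ∈ Finset.univ.filter (fun j' => pa1 j' = J),
      withinBlockProb pa1 w1 j' = 1 := by
    intro J
    unfold withinBlockProb
    rw [Finset.sum_congr rfl (fun j' hj' => by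
      rw [(Finset.mem_filter.mp hj').2])]
    rw [← Finset.sum_div, ← coarseWeight]
    exact div_self (hW1 J).ne'
  have key : (∑ j', liftedCoupling pa0 pa1 w0 w1 γ i j')
      = withinBlockProb pa0 w0 i * ∑ J, γ (pa0 i) J := by
    rw [← Finset.sum_fiberwise_of_maps_to (fun j' _ => Finset.mem_univ (pa1 j'))
      (liftedCoupling pa0 pa1 w0 w1 γ i), Finset.mul_sum]
    refine Finset.sum_congr rfl fun J _ => ?_
    have : ∑ j' ∈ Finset.univ.filter (fun j' => pa1 j' = J),
        liftedCoupling pa0 pa1 w0 w1 γ i j'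
        = γ (pa0 i) J * withinBlockProb pa0 w0 i *
            ∑ j' ∈ Finset.univ.filter (fun j' => pa1 j' = J),
              withinBlockProb pa1 w1 j' := by
      rw [Finset.mul_sum]
      refine Finset.sum_congr rfl fun j' hj' => ?_
      unfold liftedCoupling
      rw [(Finset.mem_filter.mp hj').2]
    rw [this, hsum J, mul_one]
    ring
  have hα : withinBlockProb pa0 w0 i ≠ 0 :=
    (div_pos (hw0 i) (hW0 (pa0 i))).ne'
  have hW0α : coarseWeight pa0 w0 (pa0 i) * withinBlockProb pa0 w0 i = w0 i := by
    unfold withinBlockProb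
    field_simp
    exact mul_div_cancel_left₀ _ (hW0 (pa0 i)).ne'
  rw [hγ0lift, hγ0, key]
  unfold liftedCoupling
  have hs' : (∑ J, γ (pa0 i) J) ≠ 0 := (hs (pa0 i)).ne'
  field_simp
  rw [← hW0α]
  ring
end

section
/- In the traveling-Dirac setting with m0, m1 > 0 and τ ≥ 0, the mass path is strictly positive along the whole trajectory: m(t) = A t² − 2 B t + m0 > 0 for every t ∈ [0, 1]. -/
theorem travelling_dirac_mass_positive
    (m0 m1 τ : ℝ) (hm0 : 0 < m0) (hm1 : 0 < m1) (hτ : 0 ≤ τ)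
    (c A B : ℝ)
    (hc : c = Real.sqrt (m0 * m1 / (1 + τ ^ 2)))
    (hA : A = m0 + m1 - 2 * c) (hB : B = m0 - c)
    (m : ℝ → ℝ) (hm : ∀ t, m t = A * t ^ 2 - 2 * B * t + m0) :
    ∀ t ∈ Set.Icc (0 : ℝ) 1, 0 < m t := by
  have hc0 : 0 ≤ c := hc ▸ Real.sqrt_nonneg _
  rintro t ⟨h0, h1⟩
  rw [hm, hA, hB]
  rcases eq_or_lt_of_le h0 with h | h
  · subst h; simpa using hm0
  · nlinarith [mul_nonneg hc0 (mul_nonneg h.le (sub_nonneg.2 h1)),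
      mul_nonneg hm0.le (sq_nonneg (1 - t)), mul_pos hm1 (mul_pos h h)]
end

section
/- Let m0 > 0, m1 > 0 and τ > 0 be real numbers, and set c = √(m0 m1 / (1 + τ²)). Then arctan((m1 − c)/(τ c)) + arctan((m0 − c)/(τ c)) = arctan τ. -/
/-!
Write `x = (m1 - c)/(τ c)` and `y = (m0 - c)/(τ c)`. Since `m0 m1 = c² (1 + τ²)`, both
`x + y` and `τ (1 - x y)` equal `(m0 + m1 - 2c)/(τ c)`, and this is positive because
`2c < 2√(m0 m1) ≤ m0 + m1`. So `x y < 1`, and the addition formula for `arctan` gives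
`arctan x + arctan y = arctan ((x + y)/(1 - x y)) = arctan τ`.
-/

open Real

theorem Real.arctan_add_eq_of_add_eq_mul_one_sub {x y t : ℝ} (hxy : x * y < 1)
    (h : x + y = t * (1 - x * y)) : arctan x + arctan y = arctan t := by
  rw [arctan_add hxy, h, mul_div_cancel_right₀ _ (sub_pos.mpr hxy).ne']

section TravellingDirac

variable {m0 m1 τ c : ℝ}

theorem two_mul_lt_add_of_mul_eq_sq_mul_one_add_sq (hm0 : 0 < m0) (hm1 : 0 < m1)
    (hτ : τ ≠ 0) (hc : 0 < c) (hm : m0 * m1 = c ^ 2 * (1 + τ ^ 2)) : 2 * c < m0 + m1 := by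
  have hτ2 : 0 < τ ^ 2 := by positivity
  nlinarith [sq_nonneg (m0 - m1), mul_pos hτ2 (mul_pos hc hc)]

theorem one_sub_mul_eq_of_mul_eq_sq_mul_one_add_sq (hτ : τ ≠ 0) (hc : c ≠ 0)
    (hm : m0 * m1 = c ^ 2 * (1 + τ ^ 2)) :
    1 - (m1 - c) / (τ * c) * ((m0 - c) / (τ * c)) = (m0 + m1 - 2 * c) / (τ ^ 2 * c) := by
  field_simp
  linear_combination -hm

theorem add_eq_mul_one_sub_mul_of_mul_eq_sq_mul_one_add_sq (hτ : τ ≠ 0) (hc : c ≠ 0)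
    (hm : m0 * m1 = c ^ 2 * (1 + τ ^ 2)) :
    (m1 - c) / (τ * c) + (m0 - c) / (τ * c)
      = τ * (1 - (m1 - c) / (τ * c) * ((m0 - c) / (τ * c))) := by
  rw [one_sub_mul_eq_of_mul_eq_sq_mul_one_add_sq hτ hc hm]
  field_simp
  ring

end TravellingDirac

theorem travelling_dirac_arctan_identity
    (m0 m1 τ : ℝ) (hm0 : 0 < m0) (hm1 : 0 < m1) (hτ : 0 < τ)
    (c : ℝ) (hc : c = Real.sqrt (m0 * m1 / (1 + τ ^ 2))) :
    Real.arctan ((m1 - c) / (τ * c)) + Real.arctan ((m0 - c) / (τ * c))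
      = Real.arctan τ := by
  have hcpos : 0 < c := hc ▸ Real.sqrt_pos.mpr (by positivity)
  have hm : m0 * m1 = c ^ 2 * (1 + τ ^ 2) := by
    rw [hc, sq_sqrt (by positivity), div_mul_cancel₀ _ (by positivity)]
  have hlt := two_mul_lt_add_of_mul_eq_sq_mul_one_add_sq hm0 hm1 hτ.ne' hcpos hm
  have hxy : (m1 - c) / (τ * c) * ((m0 - c) / (τ * c)) < 1 := by
    rw [← sub_pos, one_sub_mul_eq_of_mul_eq_sq_mul_one_add_sq hτ.ne' hcpos.ne' hm]
    exact div_pos (by linarith) (by positivity)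
  exact arctan_add_eq_of_add_eq_mul_one_sub hxy
    (add_eq_mul_one_sub_mul_of_mul_eq_sq_mul_one_add_sq hτ.ne' hcpos.ne' hm)
end

section
/- Let d ≥ 1, let x0 ≠ x1 ∈ ℝ^d, let δ > 0 with 0 < ‖x1 − x0‖ < πδ, and let m0, m1 > 0. Set τ = tan(‖x1 − x0‖/(2δ)), c = √(m0 m1 / (1 + τ²)), A = m0 + m1 − 2c, B = m0 − c, D = √(m0·A − B²), l = (x1 − x0)/‖x1 − x0‖, and ω0 = 2δ τ c · l. Define η(t) = x0 + (ω0 / D)·( arctan((A t − B)/D) − arctan(−B/D) ). Then D > 0, η(0) = x0, and η(1) = x1; that is, the traveling-Dirac mean trajectory connects the prescribed endpoints. -/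
/-!
With `θ = ‖x1 - x0‖ / (2δ) ∈ (0, π/2)` and `τ = tan θ`, the constant `c` satisfies
`c² (1 + τ²) = m0 m1`, which makes `m0 A - B² = m0 m1 - c² = (τ c)²`, so `D = τ c > 0`.
The same relation gives `D² - (m1 - c)(m0 - c) = c A`, so by the tangent addition formula
`arctan ((m1 - c) / D) + arctan ((m0 - c) / D) = arctan (D A / (c A)) = arctan τ = θ`.
Hence `η 1 = x0 + (θ / D) (2 δ τ c) l = x0 + (x1 - x0)`.
-/

open Real

lemma two_mul_lt_add_of_sq_lt_mul {a b c : ℝ} (ha : 0 ≤ a) (hb : 0 ≤ b) (h : c ^ 2 < a * b) :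
    2 * c < a + b := by
  have hab : c ^ 2 < ((a + b) / 2) ^ 2 := by nlinarith [sq_nonneg (a - b)]
  linarith [le_abs_self c, abs_lt_of_sq_lt_sq hab (by positivity)]

lemma arctan_div_add_arctan_div {p q D : ℝ} (hD : 0 < D) (h : p * q < D ^ 2) :
    arctan (p / D) + arctan (q / D) = arctan (D * (p + q) / (D ^ 2 - p * q)) := by
  rw [arctan_add (by rwa [div_mul_div_comm, ← sq, div_lt_one (by positivity)])]
  congr 1
  field_simp

lemma wfr_discriminant_eq {m0 m1 c τ : ℝ} (hc : c ^ 2 * (1 + τ ^ 2) = m0 * m1) :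
    m0 * (m0 + m1 - 2 * c) - (m0 - c) ^ 2 = (τ * c) ^ 2 := by
  linear_combination -hc

lemma wfr_sq_sub_mul_eq {m0 m1 c τ : ℝ} (hc : c ^ 2 * (1 + τ ^ 2) = m0 * m1) :
    (τ * c) ^ 2 - (m1 - c) * (m0 - c) = c * (m0 + m1 - 2 * c) := by
  linear_combination hc

lemma wfr_arctan_add {m0 m1 c τ : ℝ} (hc : c ^ 2 * (1 + τ ^ 2) = m0 * m1)
    (hc0 : 0 < c) (hτ : 0 < τ) (hA : 2 * c < m0 + m1) :
    arctan ((m1 - c) / (τ * c)) + arctan ((m0 - c) / (τ * c)) = arctan τ := by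
  have hcA : 0 < c * (m0 + m1 - 2 * c) := mul_pos hc0 (by linarith)
  rw [arctan_div_add_arctan_div (by positivity) (by linarith [wfr_sq_sub_mul_eq hc]),
    wfr_sq_sub_mul_eq hc]
  congr 1
  rw [div_eq_iff hcA.ne']
  ring

theorem travelling_dirac_mean_connects_endpoints_general
    {d : ℕ}
    (x0 x1 : EuclideanSpace ℝ (Fin d))
    (δ : ℝ) (hδ : 0 < δ) (hnorm : 0 < ‖x1 - x0‖ ∧ ‖x1 - x0‖ < Real.pi * δ)
    (m0 m1 : ℝ) (hm0 : 0 < m0) (hm1 : 0 < m1)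
    (τ c A B D : ℝ)
    (hτ : τ = Real.tan (‖x1 - x0‖ / (2 * δ)))
    (hc : c = Real.sqrt (m0 * m1 / (1 + τ ^ 2)))
    (hA : A = m0 + m1 - 2 * c) (hB : B = m0 - c)
    (hD : D = Real.sqrt (m0 * A - B ^ 2))
    (l : EuclideanSpace ℝ (Fin d)) (hl : l = ‖x1 - x0‖⁻¹ • (x1 - x0))
    (ω0 : EuclideanSpace ℝ (Fin d)) (hω0 : ω0 = (2 * δ * τ * c) • l)
    (η : ℝ → EuclideanSpace ℝ (Fin d))
    (hη : ∀ t, η t = x0 +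
      ((Real.arctan ((A * t - B) / D) - Real.arctan (-B / D)) / D) • ω0) :
    0 < D ∧ η 0 = x0 ∧ η 1 = x1 := by
  obtain ⟨hn0, hnπ⟩ := hnorm
  set θ := ‖x1 - x0‖ / (2 * δ) with hθ
  have hθ0 : 0 < θ := by positivity
  have hθπ : θ < π / 2 := by rw [hθ, div_lt_div_iff₀ (by positivity) two_pos]; linarith
  have hτ0 : 0 < τ := hτ ▸ tan_pos_of_pos_of_lt_pi_div_two hθ0 hθπ
  have hc0 : 0 < c := hc ▸ sqrt_pos.2 (by positivity)
  have hcτ : c ^ 2 * (1 + τ ^ 2) = m0 * m1 := by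
    rw [hc, sq_sqrt (by positivity), div_mul_cancel₀ _ (by positivity)]
  have hDτc : D = τ * c := by
    rw [hD, hA, hB, wfr_discriminant_eq hcτ, sqrt_sq (by positivity)]
  have h2c : 2 * c < m0 + m1 := two_mul_lt_add_of_sq_lt_mul hm0.le hm1.le <| by
    nlinarith [mul_pos (pow_pos hc0 2) (pow_pos hτ0 2)]
  have harctan : arctan ((A * 1 - B) / D) - arctan (-B / D) = θ := by
    rw [neg_div, arctan_neg, sub_neg_eq_add, hA, hB, hDτc, mul_one,
      show m0 + m1 - 2 * c - (m0 - c) = m1 - c by ring, wfr_arctan_add hcτ hc0 hτ0 h2c, hτ,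
      arctan_tan (by linarith) hθπ]
  refine ⟨hDτc ▸ by positivity, by simp [hη], ?_⟩
  have hcoeff : θ / (τ * c) * (2 * δ * τ * c) * ‖x1 - x0‖⁻¹ = 1 := by
    rw [hθ]; field_simp
  rw [hη, harctan, hω0, hl, smul_smul, smul_smul, hDτc, hcoeff, one_smul]
  abel

theorem travelling_dirac_mean_connects_endpoints
    {d : ℕ} (hd : 1 ≤ d)
    (x0 x1 : EuclideanSpace ℝ (Fin d)) (hx : x0 ≠ x1)
    (δ : ℝ) (hδ : 0 < δ) (hnorm : 0 < ‖x1 - x0‖ ∧ ‖x1 - x0‖ < Real.pi * δ)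
    (m0 m1 : ℝ) (hm0 : 0 < m0) (hm1 : 0 < m1)
    (τ c A B D : ℝ)
    (hτ : τ = Real.tan (‖x1 - x0‖ / (2 * δ)))
    (hc : c = Real.sqrt (m0 * m1 / (1 + τ ^ 2)))
    (hA : A = m0 + m1 - 2 * c) (hB : B = m0 - c)
    (hD : D = Real.sqrt (m0 * A - B ^ 2))
    (l : EuclideanSpace ℝ (Fin d)) (hl : l = ‖x1 - x0‖⁻¹ • (x1 - x0))
    (ω0 : EuclideanSpace ℝ (Fin d)) (hω0 : ω0 = (2 * δ * τ * c) • l)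
    (η : ℝ → EuclideanSpace ℝ (Fin d))
    (hη : ∀ t, η t = x0 +
      ((Real.arctan ((A * t - B) / D) - Real.arctan (-B / D)) / D) • ω0) :
    0 < D ∧ η 0 = x0 ∧ η 1 = x1 :=
  travelling_dirac_mean_connects_endpoints_general x0 x1 δ hδ hnorm m0 m1 hm0 hm1 τ c A B D hτ hc hA
    hB hD l hl ω0 hω0 η hη
end

section
/- Let d ≥ 1 and let η : ℝ → ℝ^d, m : ℝ → ℝ, σ : ℝ → ℝ be differentiable with m(t) > 0 and σ(t) > 0 for all t. Define the conditional Gaussian measure path ρ(t, x) = m(t)·(2π σ(t)²)^{−d/2}·exp(−‖x − η(t)‖²/(2σ(t)²)), the conditional velocity field u(t, x) = (σ′(t)/σ(t))·(x − η(t)) + η′(t), and the growth rate g(t) = m′(t)/m(t). Then ρ satisfies the continuity equation with source pointwise: for every t ∈ ℝ and x ∈ ℝ^d, ∂ρ/∂t (t, x) + div_x( ρ(t, ·) u(t, ·) )(x) = ρ(t, x)·g(t), where div_x F = Σ_{k=1}^d ∂F_k/∂x_k denotes the spatial divergence. -/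
open scoped BigOperators

/-- Spatial divergence of a vector field on `ℝ^d`:
the sum of the partial derivatives of its components. -/
noncomputable def spatialDiv {d : ℕ}
    (F : EuclideanSpace ℝ (Fin d) → EuclideanSpace ℝ (Fin d))
    (x : EuclideanSpace ℝ (Fin d)) : ℝ :=
  ∑ k, fderiv ℝ F x (EuclideanSpace.single k (1 : ℝ)) k

/-!
Both derivatives of the Gaussian path are `ρ` times a logarithmic derivative: in time,
`m'/m - d σ'/σ + ⟪x - η, η'⟫/σ² + ‖x - η‖² σ'/σ³`; in space, `∇ρ = -ρ (x - η)/σ²`.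
Since `u = (σ'/σ)(x - η) + η'` is affine, `div u = d σ'/σ`, and the product rule
`div (ρ u) = ⟪∇ρ, u⟫ + ρ div u` cancels every term of the time derivative except `ρ m'/m`.
-/

open Real
open scoped RealInnerProductSpace

section GaussianPath

variable {E : Type*} [NormedAddCommGroup E] [InnerProductSpace ℝ E]

noncomputable def gaussianPath (d : ℕ) (m σ : ℝ → ℝ) (η : ℝ → E) (t : ℝ) (x : E) : ℝ :=
  m t * (2 * π * σ t ^ 2) ^ (-(d : ℝ) / 2) * exp (-‖x - η t‖ ^ 2 / (2 * σ t ^ 2))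

theorem HasDerivAt.rpow_const_mul_sq {σ : ℝ → ℝ} {σ' t c : ℝ} (p : ℝ)
    (hσ : HasDerivAt σ σ' t) (hc : 0 < c) (hσt : σ t ≠ 0) :
    HasDerivAt (fun s => (c * σ s ^ 2) ^ p) ((c * σ t ^ 2) ^ p * (2 * p * σ' / σ t)) t := by
  have hpos : 0 < c * σ t ^ 2 := by positivity
  refine (((hσ.pow 2).const_mul c).rpow_const (p := p) (Or.inl hpos.ne')).congr_deriv ?_
  simp only [Pi.pow_apply]
  rw [rpow_sub hpos, rpow_one]
  field_simp
  ring

theorem HasDerivAt.neg_norm_sub_sq_div {η : ℝ → E} {σ : ℝ → ℝ} {η' : E} {σ' t : ℝ} (x : E)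
    (hη : HasDerivAt η η' t) (hσ : HasDerivAt σ σ' t) (hσt : σ t ≠ 0) :
    HasDerivAt (fun s => -‖x - η s‖ ^ 2 / (2 * σ s ^ 2))
      (⟪x - η t, η'⟫ / σ t ^ 2 + ‖x - η t‖ ^ 2 * σ' / σ t ^ 3) t := by
  refine (((hη.const_sub x).norm_sq.neg).div ((hσ.pow 2).const_mul 2)
    (by simp [hσt])).congr_deriv ?_
  simp only [Pi.pow_apply, Pi.neg_apply, inner_neg_right]
  field_simp
  ring

theorem hasFDerivAt_neg_norm_sub_sq_div (c : E) (s : ℝ) (x : E) :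
    HasFDerivAt (fun y => -‖y - c‖ ^ 2 / (2 * s ^ 2)) (-(s ^ 2)⁻¹ • innerSL ℝ (x - c)) x := by
  refine (((hasFDerivAt_id x).sub_const c).norm_sq.neg.mul_const (2 * s ^ 2)⁻¹).congr_fderiv ?_
  ext y
  simp only [mul_inv_rev, id_eq, map_sub, ContinuousLinearMap.comp_id, smul_neg, neg_apply,
    smul_apply, sub_apply, coe_innerSL_apply, nsmul_eq_mul, Nat.cast_ofNat, smul_eq_mul, neg_smul,
    neg_inj]
  ring

variable (d : ℕ) {m σ : ℝ → ℝ} {η : ℝ → E}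

theorem hasDerivAt_gaussianPath {m' σ' t : ℝ} {η' : E} (x : E)
    (hm : HasDerivAt m m' t) (hσ : HasDerivAt σ σ' t) (hη : HasDerivAt η η' t)
    (hmt : m t ≠ 0) (hσt : σ t ≠ 0) :
    HasDerivAt (fun s => gaussianPath d m σ η s x)
      (gaussianPath d m σ η t x * (m' / m t - d * σ' / σ t
        + ⟪x - η t, η'⟫ / σ t ^ 2 + ‖x - η t‖ ^ 2 * σ' / σ t ^ 3)) t := by
  refine ((hm.mul (hσ.rpow_const_mul_sq (-(d : ℝ) / 2) (by positivity) hσt)).mul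
    (HasDerivAt.neg_norm_sub_sq_div x hη hσ hσt).exp).congr_deriv ?_
  simp only [gaussianPath, Pi.mul_apply]
  field_simp
  ring

theorem hasFDerivAt_gaussianPath (t : ℝ) (x : E) :
    HasFDerivAt (gaussianPath d m σ η t)
      (-(gaussianPath d m σ η t x / σ t ^ 2) • innerSL ℝ (x - η t)) x := by
  refine (((hasFDerivAt_neg_norm_sub_sq_div (η t) (σ t) x).exp).const_mul
    (m t * (2 * π * σ t ^ 2) ^ (-(d : ℝ) / 2))).congr_fderiv ?_
  ext y
  simp only [map_sub, neg_smul, smul_neg, neg_apply, smul_apply, sub_apply, coe_innerSL_apply,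
    smul_eq_mul, gaussianPath, neg_inj]
  ring

end GaussianPath

section SpatialDiv

variable {ι : Type*} [Fintype ι] [DecidableEq ι]

theorem ContinuousLinearMap.sum_apply_single_mul (L : EuclideanSpace ℝ ι →L[ℝ] ℝ)
    (v : EuclideanSpace ℝ ι) : ∑ k, L (EuclideanSpace.single k 1) * v k = L v := by
  conv_rhs => rw [← (EuclideanSpace.basisFun ι ℝ).sum_repr v]
  simp [mul_comm]

variable {d : ℕ} {x : EuclideanSpace ℝ (Fin d)}

theorem spatialDiv_smul {f : EuclideanSpace ℝ (Fin d) → ℝ}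
    {F : EuclideanSpace ℝ (Fin d) → EuclideanSpace ℝ (Fin d)}
    (hf : DifferentiableAt ℝ f x) (hF : DifferentiableAt ℝ F x) :
    spatialDiv (fun y => f y • F y) x = fderiv ℝ f x (F x) + f x * spatialDiv F x := by
  rw [spatialDiv, spatialDiv, fderiv_fun_smul hf hF]
  simp [Finset.sum_add_distrib, Finset.mul_sum, (fderiv ℝ f x).sum_apply_single_mul, add_comm]

theorem spatialDiv_smul_sub_add (a : ℝ) (c b : EuclideanSpace ℝ (Fin d)) :
    spatialDiv (fun y => a • (y - c) + b) x = a * d := by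
  have hF : HasFDerivAt (fun y : EuclideanSpace ℝ (Fin d) => a • (y - c) + b)
      (a • ContinuousLinearMap.id ℝ _) x :=
    (((hasFDerivAt_id x).sub_const c).const_smul a).add_const b
  simp [spatialDiv, hF.fderiv, mul_comm]

end SpatialDiv

theorem gaussian_path_continuity_equation_with_source_general
    {d : ℕ}
    (η : ℝ → EuclideanSpace ℝ (Fin d)) (m σ : ℝ → ℝ)
    (hη : Differentiable ℝ η) (hm : Differentiable ℝ m) (hσ : Differentiable ℝ σ)
    (hmpos : ∀ t, 0 < m t) (hσpos : ∀ t, 0 < σ t)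
    (ρ : ℝ → EuclideanSpace ℝ (Fin d) → ℝ)
    (hρ : ∀ t x, ρ t x
      = m t * (2 * Real.pi * σ t ^ 2) ^ (-(d : ℝ) / 2)
          * Real.exp (-‖x - η t‖ ^ 2 / (2 * σ t ^ 2)))
    (u : ℝ → EuclideanSpace ℝ (Fin d) → EuclideanSpace ℝ (Fin d))
    (hu : ∀ t x, u t x = (deriv σ t / σ t) • (x - η t) + deriv η t)
    (g : ℝ → ℝ) (hg : ∀ t, g t = deriv m t / m t) :
    ∀ (t : ℝ) (x : EuclideanSpace ℝ (Fin d)),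
      deriv (fun s => ρ s x) t + spatialDiv (fun y => ρ t y • u t y) x
        = ρ t x * g t := by
  intro t x
  obtain rfl : ρ = gaussianPath d m σ η := funext fun t => funext (hρ t)
  have hut : u t = fun y => (deriv σ t / σ t) • (y - η t) + deriv η t := funext (hu t)
  have hmt := (hmpos t).ne'
  have hσt := (hσpos t).ne'
  have hρ_time :=
    hasDerivAt_gaussianPath d x (hm t).hasDerivAt (hσ t).hasDerivAt (hη t).hasDerivAt hmt hσt
  have hρ_space : HasFDerivAt (gaussianPath d m σ η t) _ x := hasFDerivAt_gaussianPath d t x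
  rw [hρ_time.deriv, hut, spatialDiv_smul hρ_space.differentiableAt (by fun_prop),
    spatialDiv_smul_sub_add, hρ_space.fderiv, hg]
  simp only [FunLike.coe_smul, Pi.smul_apply, innerSL_apply_apply, inner_add_right,
    inner_smul_right, real_inner_self_eq_norm_sq, smul_eq_mul]
  field_simp
  ring

theorem gaussian_path_continuity_equation_with_source
    {d : ℕ} (hd : 1 ≤ d)
    (η : ℝ → EuclideanSpace ℝ (Fin d)) (m σ : ℝ → ℝ)
    (hη : Differentiable ℝ η) (hm : Differentiable ℝ m) (hσ : Differentiable ℝ σ)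
    (hmpos : ∀ t, 0 < m t) (hσpos : ∀ t, 0 < σ t)
    (ρ : ℝ → EuclideanSpace ℝ (Fin d) → ℝ)
    (hρ : ∀ t x, ρ t x
      = m t * (2 * Real.pi * σ t ^ 2) ^ (-(d : ℝ) / 2)
          * Real.exp (-‖x - η t‖ ^ 2 / (2 * σ t ^ 2)))
    (u : ℝ → EuclideanSpace ℝ (Fin d) → EuclideanSpace ℝ (Fin d))
    (hu : ∀ t x, u t x = (deriv σ t / σ t) • (x - η t) + deriv η t)
    (g : ℝ → ℝ) (hg : ∀ t, g t = deriv m t / m t) :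
    ∀ (t : ℝ) (x : EuclideanSpace ℝ (Fin d)),
      deriv (fun s => ρ s x) t + spatialDiv (fun y => ρ t y • u t y) x
        = ρ t x * g t :=
  gaussian_path_continuity_equation_with_source_general η m σ hη hm hσ hmpos hσpos ρ hρ u hu g hg
end
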